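/- arXiv:2112.03464 — 2 statements merged into one kernel-verified Lean document; each statement's English description precedes it below -/
import Mathlib

section
/- Let n ≥ 1, K ≥ 1, κ ∈ (0,1], τ ∈ (0,1] and ρ ≥ τ. Let ω : ℝ → ℝⁿ and, for each k ∈ ℤⁿ with 0 < |k| ≤ K, let F̂(k,·) : ℝ → ℂ, all differentiable at a point w₀. Assume that for all k with 0 < |k| ≤ K one has |⟨k,ω(w₀)⟩| ≥ κ and |⟨k,ω'(w₀)⟩| ≤ |k|. Define Ŝ(k,w) = F̂(k,w)/(i⟨k,ω(w)⟩). Then Σ_{0<|k|≤K} (|Ŝ(k,w₀)| + |∂_w Ŝ(k,w₀)|) e^{(ρ−τ)|k|} ≤ (2/(τκ²)) Σ_{0<|k|≤K} (|F̂(k,w₀)| + |∂_w F̂(k,w₀)|) e^{ρ|k|}. -/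
/-!
Each coefficient is treated separately. With `D = |⟨k, ω(w₀)⟩| ≥ κ`, `m = |k| ≥ 1` and the
quotient rule, `|Ŝ| + |∂Ŝ| ≤ (|F̂| + |∂F̂|)/D + |F̂| m/D² ≤ 2 (|F̂| + |∂F̂|) m/κ²` (as `κ ≤ 1 ≤ m`),
and the loss `m` is absorbed by the shrinking of the width: `m e^{-τm} ≤ 1/τ`.
Only finitely many `k` satisfy `|k| ≤ K`, so the sums are finite.
-/

open Real Finset

lemma tsum_ite_le_mul_tsum_ite {α : Type*} {p : α → Prop} [DecidablePred p]
    (hp : {x | p x}.Finite) {f g : α → ℝ} {c : ℝ} (hfg : ∀ x, p x → f x ≤ c * g x) :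
    ∑' x, (if p x then f x else 0) ≤ c * ∑' x, (if p x then g x else 0) := by
  have hzero : ∀ h : α → ℝ, ∀ x ∉ hp.toFinset, (if p x then h x else 0) = 0 :=
    fun h x hx => if_neg (by simpa using hx)
  rw [tsum_eq_sum (hzero f), tsum_eq_sum (hzero g), mul_sum]
  refine sum_le_sum fun x hx => ?_
  have hpx : p x := by simpa using hx
  simpa only [if_pos hpx] using hfg x hpx

lemma finite_setOf_sum_abs_intCast_le {ι : Type*} [Fintype ι] [DecidableEq ι] (K : ℝ) :
    {k : ι → ℤ | ∑ j, |(k j : ℝ)| ≤ K}.Finite := by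
  refine (Set.finite_Icc (fun _ => -⌈K⌉) (fun _ => ⌈K⌉)).subset fun k hk => ?_
  have hj : ∀ j, |k j| ≤ ⌈K⌉ := fun j => by
    have : |(k j : ℝ)| ≤ K :=
      (single_le_sum (fun i _ => abs_nonneg (k i : ℝ)) (mem_univ j)).trans hk
    exact_mod_cast this.trans (Int.le_ceil K)
  exact ⟨fun j => neg_le_of_abs_le (hj j), fun j => le_of_abs_le (hj j)⟩

lemma one_le_sum_abs_intCast {ι : Type*} [Fintype ι] {k : ι → ℤ}
    (hk : 0 < ∑ j, |(k j : ℝ)|) : 1 ≤ ∑ j, |(k j : ℝ)| := by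
  have : (0 : ℤ) < ∑ j, |k j| := by exact_mod_cast hk
  exact_mod_cast (by omega : (1 : ℤ) ≤ ∑ j, |k j|)

lemma hasDerivAt_sum_mul_apply {ι : Type*} [Fintype ι] (c : ι → ℝ) {ω : ℝ → ι → ℝ} {w : ℝ}
    (hω : DifferentiableAt ℝ ω w) :
    HasDerivAt (fun x => ∑ j, c j * ω x j) (∑ j, c j * deriv ω w j) w :=
  HasDerivAt.fun_sum fun j _ => (hasDerivAt_pi.mp hω.hasDerivAt j).const_mul (c j)

lemma norm_deriv_div_le {𝕜 𝕜' : Type*} [NontriviallyNormedField 𝕜] [NontriviallyNormedField 𝕜']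
    [NormedAlgebra 𝕜 𝕜'] {f g : 𝕜 → 𝕜'} {x : 𝕜} (hf : DifferentiableAt 𝕜 f x)
    (hg : DifferentiableAt 𝕜 g x) (hx : g x ≠ 0) :
    ‖deriv (fun y => f y / g y) x‖ ≤
      ‖deriv f x‖ / ‖g x‖ + ‖f x‖ * ‖deriv g x‖ / ‖g x‖ ^ 2 := by
  have hgx : ‖g x‖ ≠ 0 := norm_ne_zero_iff.mpr hx
  rw [(hf.hasDerivAt.fun_div hg.hasDerivAt hx).deriv, norm_div, norm_pow]
  calc ‖deriv f x * g x - f x * deriv g x‖ / ‖g x‖ ^ 2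
      ≤ (‖deriv f x‖ * ‖g x‖ + ‖f x‖ * ‖deriv g x‖) / ‖g x‖ ^ 2 := by
        gcongr
        exact (norm_sub_le _ _).trans_eq (by rw [norm_mul, norm_mul])
    _ = ‖deriv f x‖ / ‖g x‖ + ‖f x‖ * ‖deriv g x‖ / ‖g x‖ ^ 2 := by
        field_simp

lemma mul_exp_neg_mul_le_inv {τ : ℝ} (hτ : 0 < τ) (m : ℝ) : m * exp (-(τ * m)) ≤ τ⁻¹ := by
  have hle : τ * m ≤ exp (τ * m) := by linarith [add_one_le_exp (τ * m)]
  rw [exp_neg, ← div_eq_mul_inv, div_le_iff₀ (exp_pos _), inv_mul_eq_div, le_div_iff₀ hτ]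
  linarith

lemma quotient_weight_bound {κ τ ρ m a b D d : ℝ} (hκ0 : 0 < κ) (hκ1 : κ ≤ 1) (hτ : 0 < τ)
    (hm : 1 ≤ m) (hD : κ ≤ D) (hd : |d| ≤ m) (ha : 0 ≤ a) (hb : 0 ≤ b) :
    (a / D + (b / D + a * |d| / D ^ 2)) * exp ((ρ - τ) * m) ≤
      2 / (τ * κ ^ 2) * ((a + b) * exp (ρ * m)) := by
  have hD0 : 0 < D := hκ0.trans_le hD
  have hsum : (a + b) / D ≤ (a + b) * m / κ ^ 2 :=
    calc (a + b) / D ≤ (a + b) / κ := by gcongr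
      _ ≤ (a + b) / κ ^ 2 := by gcongr; nlinarith
      _ ≤ (a + b) * m / κ ^ 2 := by gcongr; nlinarith
  have hcross : a * |d| / D ^ 2 ≤ (a + b) * m / κ ^ 2 := by
    gcongr
    exact le_add_of_nonneg_right hb
  calc (a / D + (b / D + a * |d| / D ^ 2)) * exp ((ρ - τ) * m)
      = ((a + b) / D + a * |d| / D ^ 2) * exp ((ρ - τ) * m) := by ring
    _ ≤ 2 * ((a + b) * m / κ ^ 2) * exp ((ρ - τ) * m) := by gcongr; linarith
    _ = 2 * (a + b) / κ ^ 2 * (m * exp (-(τ * m))) * exp (ρ * m) := by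
        rw [show (ρ - τ) * m = -(τ * m) + ρ * m by ring, exp_add]; ring
    _ ≤ 2 * (a + b) / κ ^ 2 * τ⁻¹ * exp (ρ * m) := by
        gcongr
        exact mul_exp_neg_mul_le_inv hτ m
    _ = 2 / (τ * κ ^ 2) * ((a + b) * exp (ρ * m)) := by
        field_simp

lemma norm_add_norm_deriv_div_I_mul_exp_le {F : ℝ → ℂ} {φ : ℝ → ℝ} {φ' w₀ κ τ ρ m : ℝ}
    (hF : DifferentiableAt ℝ F w₀) (hφ : HasDerivAt φ φ' w₀) (hκ0 : 0 < κ) (hκ1 : κ ≤ 1)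
    (hτ : 0 < τ) (hm : 1 ≤ m) (hφκ : κ ≤ |φ w₀|) (hφ' : |φ'| ≤ m) :
    (‖F w₀ / (Complex.I * φ w₀)‖ + ‖deriv (fun w => F w / (Complex.I * φ w)) w₀‖) *
        exp ((ρ - τ) * m) ≤
      2 / (τ * κ ^ 2) * ((‖F w₀‖ + ‖deriv F w₀‖) * exp (ρ * m)) := by
  have hψ : HasDerivAt (fun w => Complex.I * φ w) (Complex.I * φ') w₀ :=
    hφ.ofReal_comp.const_mul Complex.I
  have hnorm : ∀ x : ℝ, ‖Complex.I * x‖ = |x| := by simp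
  have hne : Complex.I * φ w₀ ≠ 0 := by
    rw [← norm_ne_zero_iff, hnorm]
    linarith
  refine le_trans (mul_le_mul_of_nonneg_right
    (add_le_add le_rfl (norm_deriv_div_le hF hψ.differentiableAt hne)) (exp_pos _).le) ?_
  rw [hψ.deriv, norm_div, hnorm, hnorm]
  exact quotient_weight_bound hκ0 hκ1 hτ hm hφκ hφ' (norm_nonneg _) (norm_nonneg _)

theorem stmt_4_general (n : ℕ) (K κ τ ρ : ℝ)
    (hκ0 : 0 < κ) (hκ1 : κ ≤ 1) (hτ0 : 0 < τ)
    (ω : ℝ → Fin n → ℝ) (w₀ : ℝ) (hω : DifferentiableAt ℝ ω w₀)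
    (Fhat : (Fin n → ℤ) → ℝ → ℂ)
    (hFdiff : ∀ k : Fin n → ℤ, 0 < ∑ j, |(k j : ℝ)| → ∑ j, |(k j : ℝ)| ≤ K →
      DifferentiableAt ℝ (Fhat k) w₀)
    (hdio : ∀ k : Fin n → ℤ, 0 < ∑ j, |(k j : ℝ)| → ∑ j, |(k j : ℝ)| ≤ K →
      κ ≤ |∑ j, (k j : ℝ) * ω w₀ j|)
    (hder : ∀ k : Fin n → ℤ, 0 < ∑ j, |(k j : ℝ)| → ∑ j, |(k j : ℝ)| ≤ K →
      |∑ j, (k j : ℝ) * deriv ω w₀ j| ≤ ∑ j, |(k j : ℝ)|)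
    (Shat : (Fin n → ℤ) → ℝ → ℂ)
    (hShat : ∀ (k : Fin n → ℤ) (w : ℝ),
      Shat k w = Fhat k w / (Complex.I * Complex.ofReal (∑ j, (k j : ℝ) * ω w j))) :
    ∑' k : Fin n → ℤ,
        (if 0 < ∑ j, |(k j : ℝ)| ∧ ∑ j, |(k j : ℝ)| ≤ K then
          (‖Shat k w₀‖ + ‖deriv (Shat k) w₀‖) *
            Real.exp ((ρ - τ) * ∑ j, |(k j : ℝ)|)
        else 0) ≤
      (2 / (τ * κ ^ 2)) *
        ∑' k : Fin n → ℤ,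
          (if 0 < ∑ j, |(k j : ℝ)| ∧ ∑ j, |(k j : ℝ)| ≤ K then
            (‖Fhat k w₀‖ + ‖deriv (Fhat k) w₀‖) *
              Real.exp (ρ * ∑ j, |(k j : ℝ)|)
          else 0) := by
  refine tsum_ite_le_mul_tsum_ite ((finite_setOf_sum_abs_intCast_le K).subset fun k hk => hk.2)
    fun k ⟨hpos, hle⟩ => ?_
  rw [show Shat k = fun w => Fhat k w / (Complex.I * (∑ j, (k j : ℝ) * ω w j : ℝ)) from
    funext (hShat k)]
  exact (norm_add_norm_deriv_div_I_mul_exp_le (hFdiff k hpos hle)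
    (hasDerivAt_sum_mul_apply _ hω) hκ0 hκ1 hτ0
    (one_le_sum_abs_intCast hpos) (hdio k hpos hle) (hder k hpos hle) :)

/-- Quantitative solution of the truncated homological equation with parameter
derivatives: dividing by divisors `⟨k, ω(w)⟩` of size `≥ κ` whose `w`-derivative is
bounded by `|k|₁`, the weighted Fourier norm (with width shrunk from `ρ` to `ρ - τ`)
of the solution and its `w`-derivative is bounded by `2/(τκ²)` times that of the data. -/
theorem stmt_4 (n : ℕ) (hn : 1 ≤ n) (K κ τ ρ : ℝ) (hK : 1 ≤ K)
    (hκ0 : 0 < κ) (hκ1 : κ ≤ 1) (hτ0 : 0 < τ) (hτ1 : τ ≤ 1) (hρ : τ ≤ ρ)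
    (ω : ℝ → Fin n → ℝ) (w₀ : ℝ) (hω : DifferentiableAt ℝ ω w₀)
    (Fhat : (Fin n → ℤ) → ℝ → ℂ)
    (hFdiff : ∀ k : Fin n → ℤ, 0 < ∑ j, |(k j : ℝ)| → ∑ j, |(k j : ℝ)| ≤ K →
      DifferentiableAt ℝ (Fhat k) w₀)
    (hdio : ∀ k : Fin n → ℤ, 0 < ∑ j, |(k j : ℝ)| → ∑ j, |(k j : ℝ)| ≤ K →
      κ ≤ |∑ j, (k j : ℝ) * ω w₀ j|)
    (hder : ∀ k : Fin n → ℤ, 0 < ∑ j, |(k j : ℝ)| → ∑ j, |(k j : ℝ)| ≤ K →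
      |∑ j, (k j : ℝ) * deriv ω w₀ j| ≤ ∑ j, |(k j : ℝ)|)
    (Shat : (Fin n → ℤ) → ℝ → ℂ)
    (hShat : ∀ (k : Fin n → ℤ) (w : ℝ),
      Shat k w = Fhat k w / (Complex.I * Complex.ofReal (∑ j, (k j : ℝ) * ω w j))) :
    ∑' k : Fin n → ℤ,
        (if 0 < ∑ j, |(k j : ℝ)| ∧ ∑ j, |(k j : ℝ)| ≤ K then
          (‖Shat k w₀‖ + ‖deriv (Shat k) w₀‖) *
            Real.exp ((ρ - τ) * ∑ j, |(k j : ℝ)|)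
        else 0) ≤
      (2 / (τ * κ ^ 2)) *
        ∑' k : Fin n → ℤ,
          (if 0 < ∑ j, |(k j : ℝ)| ∧ ∑ j, |(k j : ℝ)| ≤ K then
            (‖Fhat k w₀‖ + ‖deriv (Fhat k) w₀‖) *
              Real.exp (ρ * ∑ j, |(k j : ℝ)|)
          else 0) :=
  stmt_4_general n K κ τ ρ hκ0 hκ1 hτ0 ω w₀ hω Fhat hFdiff hdio hder Shat hShat
end

section
/- Let d ≥ 1, p ≥ 0, γ ∈ (0,1], Δ ≥ 0 and C₀ ≥ 0. There exists a constant C = C(d,p) > 0 with the following property. Suppose M : ℤ^d × ℤ^d → ℂ satisfies M_{ab} = 0 whenever |a−b| ≤ Δ and |M_{ab}| ≤ C₀ e^{−γ|a−b|} whenever |a−b| > Δ, where |·| is the Euclidean norm. Then for every finitely supported z : ℤ^d → ℂ, (Σ_{a∈ℤ^d} ⟨a⟩^{2p} |Σ_{b∈ℤ^d} M_{ab} z_b|²)^{1/2} ≤ C C₀ γ^{−(d+p)} e^{−γΔ/2} (Σ_{b∈ℤ^d} ⟨b⟩^{2p} |z_b|²)^{1/2}, where ⟨a⟩ = max(|a|,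 1). -/
/-!
Weighted Schur test. With `⟨a⟩ = max (|a|, 1)` and `K a b = ⟨a⟩^p ⟨b⟩^(-p) |M a b|`, Cauchy–Schwarz
gives `‖M z‖_p² ≤ (sup_a ∑_b K a b) (sup_b ∑_a K a b) ‖z‖_p²`. Peetre's inequality
`⟨a⟩ ≤ (1 + |a - b|) ⟨b⟩` and `(1 + t)^p ≤ C_p γ^(-p) e^(γt/4)` bound `K a b` off the band
`|a - b| ≤ Δ` by `C_p C₀ γ^(-p) e^(-γΔ/2) e^(-γ|a-b|/4)`, since `3γt/4 ≥ γΔ/2 + γt/4` for `t ≥ Δ`.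
Comparing `|a - b|` with the `ℓ¹` norm, the lattice sum of `e^(-γ|a-b|/4)` factors into `d`
two-sided geometric series, each at most `1 + 8d/γ ≤ (1 + 8d)/γ`.
-/

open Finset Real

lemma max_norm_one_le_one_add_norm_sub_mul {E : Type*} [SeminormedAddCommGroup E] (x y : E) :
    max ‖x‖ 1 ≤ (1 + ‖x - y‖) * max ‖y‖ 1 := by
  have hy : ‖y‖ ≤ max ‖y‖ 1 := le_max_left _ _
  have hy1 : 1 ≤ max ‖y‖ 1 := le_max_right _ _
  have := norm_le_norm_add_norm_sub' x y
  apply max_le <;> nlinarith [norm_nonneg (x - y)]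

lemma one_add_le_mul_exp {δ t : ℝ} (hδ : 0 < δ) (ht : 0 ≤ t) :
    1 + t ≤ (1 + δ⁻¹) * exp (δ * t) := by
  calc 1 + t ≤ (1 + δ⁻¹) * (δ * t + 1) := by
        have : δ⁻¹ * (δ * t) = t := by field_simp
        nlinarith [inv_pos.mpr hδ, mul_nonneg hδ.le ht]
    _ ≤ (1 + δ⁻¹) * exp (δ * t) := by gcongr; exact add_one_le_exp _

lemma one_add_rpow_le_mul_exp {p ε t : ℝ} (hp : 0 ≤ p) (hε : 0 < ε) (ht : 0 ≤ t) :
    (1 + t) ^ p ≤ (1 + (p + 1) / ε) ^ p * exp (ε * t) := by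
  set δ := ε / (p + 1)
  have hδ : 0 < δ := by positivity
  calc (1 + t) ^ p ≤ ((1 + δ⁻¹) * exp (δ * t)) ^ p :=
        rpow_le_rpow (by linarith) (one_add_le_mul_exp hδ ht) hp
    _ = (1 + (p + 1) / ε) ^ p * exp (p * δ * t) := by
        rw [mul_rpow (by positivity) (exp_pos _).le, ← exp_mul, inv_div]; ring_nf
    _ ≤ (1 + (p + 1) / ε) ^ p * exp (ε * t) := by
        gcongr
        calc p * δ = ε * (p / (p + 1)) := by ring
          _ ≤ ε * 1 := by gcongr; exact div_le_one_of_le₀ (by linarith) (by linarith)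
          _ = ε := mul_one ε

lemma one_add_rpow_mul_exp_neg_le {p γ Δ t : ℝ} (hp : 0 ≤ p) (hγ : 0 < γ) (hγ1 : γ ≤ 1)
    (ht : 0 ≤ t) (hΔt : Δ ≤ t) :
    (1 + t) ^ p * exp (-γ * t) ≤
      (4 * p + 5) ^ p * γ ^ (-p) * exp (-γ * Δ / 2) * exp (-(γ / 4) * t) := by
  have hconst : 1 + (p + 1) / (γ / 4) ≤ (4 * p + 5) / γ := by
    rw [div_div_eq_mul_div, le_div_iff₀ hγ, add_mul, div_mul_cancel₀ _ hγ.ne']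
    nlinarith
  have hpow : (1 + t) ^ p ≤ (4 * p + 5) ^ p * γ ^ (-p) * exp (γ / 4 * t) := by
    calc (1 + t) ^ p ≤ (1 + (p + 1) / (γ / 4)) ^ p * exp (γ / 4 * t) :=
          one_add_rpow_le_mul_exp hp (by positivity) ht
      _ ≤ ((4 * p + 5) / γ) ^ p * exp (γ / 4 * t) := by gcongr
      _ = (4 * p + 5) ^ p * γ ^ (-p) * exp (γ / 4 * t) := by
          rw [div_rpow (by linarith) hγ.le, rpow_neg hγ.le, div_eq_mul_inv]
  calc (1 + t) ^ p * exp (-γ * t)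
      ≤ (4 * p + 5) ^ p * γ ^ (-p) * exp (γ / 4 * t) * exp (-γ * t) := by gcongr
    _ = (4 * p + 5) ^ p * γ ^ (-p) * exp (-γ * t / 2) * exp (-(γ / 4) * t) := by
        rw [mul_assoc _ (exp _), ← exp_add, mul_assoc _ (exp _), ← exp_add]; ring_nf
    _ ≤ _ := by gcongr _ * ?_ * _; exact exp_le_exp.mpr (by nlinarith)

lemma max_norm_one_rpow_div_mul_le {E : Type*} [SeminormedAddCommGroup E] {p γ Δ C₀ m : ℝ}
    (x y : E) (hp : 0 ≤ p) (hγ : 0 < γ) (hγ1 : γ ≤ 1) (hC₀ : 0 ≤ C₀) (hm : 0 ≤ m)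
    (hband : ‖x - y‖ ≤ Δ → m = 0) (hdecay : Δ < ‖x - y‖ → m ≤ C₀ * exp (-γ * ‖x - y‖)) :
    max ‖x‖ 1 ^ p / max ‖y‖ 1 ^ p * m ≤
      (4 * p + 5) ^ p * γ ^ (-p) * C₀ * exp (-γ * Δ / 2) * exp (-(γ / 4) * ‖x - y‖) := by
  rcases le_or_gt ‖x - y‖ Δ with hxy | hxy
  · rw [hband hxy, mul_zero]; positivity
  have hy : 0 < max ‖y‖ 1 := lt_max_of_lt_right one_pos
  have hratio : max ‖x‖ 1 ^ p / max ‖y‖ 1 ^ p ≤ (1 + ‖x - y‖) ^ p := by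
    rw [div_le_iff₀ (by positivity), ← mul_rpow (by positivity) hy.le]
    exact rpow_le_rpow (by positivity) (max_norm_one_le_one_add_norm_sub_mul x y) hp
  calc max ‖x‖ 1 ^ p / max ‖y‖ 1 ^ p * m
      ≤ (1 + ‖x - y‖) ^ p * (C₀ * exp (-γ * ‖x - y‖)) := by gcongr; exact hdecay hxy
    _ = C₀ * ((1 + ‖x - y‖) ^ p * exp (-γ * ‖x - y‖)) := by ring
    _ ≤ C₀ * ((4 * p + 5) ^ p * γ ^ (-p) * exp (-γ * Δ / 2) * exp (-(γ / 4) * ‖x - y‖)) := by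
        gcongr C₀ * ?_; exact one_add_rpow_mul_exp_neg_le hp hγ hγ1 (norm_nonneg _) hxy.le
    _ = _ := by ring

lemma hasSum_exp_neg_mul_abs_int {σ : ℝ} (hσ : 0 < σ) :
    HasSum (fun n : ℤ => exp (-σ * |(n : ℝ)|)) (1 + 2 / (exp σ - 1)) := by
  have hr1 : exp (-σ) < 1 := exp_lt_one_iff.mpr (by linarith)
  have hgeom := hasSum_geometric_of_lt_one (exp_pos _).le hr1
  have hpow : ∀ n : ℕ, exp (-σ * |(n : ℝ)|) = exp (-σ) ^ n := fun n => by
    rw [abs_of_nonneg n.cast_nonneg, mul_comm, exp_nat_mul]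
  have hsum := HasSum.of_nat_of_neg_add_one (f := fun n : ℤ => exp (-σ * |(n : ℝ)|))
    (by simpa only [Int.cast_natCast, hpow] using hgeom)
    (by simpa only [Int.cast_neg, Int.cast_add, Int.cast_natCast, Int.cast_one, abs_neg,
      ← Nat.cast_add_one, hpow, pow_succ'] using hgeom.mul_left (exp (-σ)))
  convert hsum using 1
  have h1 : exp σ - 1 ≠ 0 := (sub_pos.mpr (one_lt_exp_iff.mpr hσ)).ne'
  have h2 : 1 - (exp σ)⁻¹ ≠ 0 := (sub_pos.mpr (by rwa [← exp_neg])).ne'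
  rw [exp_neg]
  field_simp
  ring

lemma Finset.sum_prod_le_prod_tsum {ι κ : Type*} [Fintype ι] (S : Finset (ι → κ))
    {g : ι → κ → ℝ} (hg : ∀ i n, 0 ≤ g i n) (hgs : ∀ i, Summable (g i)) :
    ∑ a ∈ S, ∏ i, g i (a i) ≤ ∏ i, ∑' n, g i n := by
  classical
  let T : ι → Finset κ := fun i => S.image (· i)
  have hST : S ⊆ Fintype.piFinset T := fun a ha =>
    Fintype.mem_piFinset.mpr fun i => mem_image_of_mem _ ha
  calc ∑ a ∈ S, ∏ i, g i (a i)
      ≤ ∑ a ∈ Fintype.piFinset T, ∏ i, g i (a i) :=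
        sum_le_sum_of_subset_of_nonneg hST fun a _ _ => prod_nonneg fun i _ => hg i (a i)
    _ = ∏ i, ∑ n ∈ T i, g i n := (prod_univ_sum T g).symm
    _ ≤ ∏ i, ∑' n, g i n := prod_le_prod (fun i _ => sum_nonneg fun n _ => hg i n)
        fun i _ => (hgs i).sum_le_tsum _ fun n _ => hg i n

noncomputable def latticeToEuclidean {d : ℕ} (a : Fin d → ℤ) : EuclideanSpace ℝ (Fin d) :=
  WithLp.toLp 2 fun j => (a j : ℝ)

lemma norm_latticeToEuclidean {d : ℕ} (a : Fin d → ℤ) :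
    ‖latticeToEuclidean a‖ = √(∑ j, (a j : ℝ) ^ 2) := by
  simp [latticeToEuclidean, EuclideanSpace.norm_eq]

lemma norm_latticeToEuclidean_sub {d : ℕ} (a b : Fin d → ℤ) :
    ‖latticeToEuclidean a - latticeToEuclidean b‖ = √(∑ j, ((a j : ℝ) - b j) ^ 2) := by
  simp [latticeToEuclidean, EuclideanSpace.norm_eq, ← WithLp.toLp_sub]

lemma sum_exp_neg_mul_norm_latticeToEuclidean_sub_le {d : ℕ} {s : ℝ} (hs : 0 < s)
    (S : Finset (Fin d → ℤ)) (c : Fin d → ℤ) :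
    ∑ a ∈ S, exp (-s * ‖latticeToEuclidean a - latticeToEuclidean c‖) ≤ (1 + 2 * d / s) ^ d := by
  let g : Fin d → ℤ → ℝ := fun j n => exp (-(s / d) * |((n - c j : ℤ) : ℝ)|)
  have hcoord (a j) :
      |((a j - c j : ℤ) : ℝ)| ≤ ‖latticeToEuclidean a - latticeToEuclidean c‖ := by
    simpa [latticeToEuclidean] using
      PiLp.norm_apply_le (latticeToEuclidean a - latticeToEuclidean c) j
  have hpoint (a) :
      exp (-s * ‖latticeToEuclidean a - latticeToEuclidean c‖) ≤ ∏ j, g j (a j) := by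
    rw [← exp_sum, exp_le_exp, ← mul_sum, neg_mul, neg_mul, neg_le_neg_iff]
    rcases Nat.eq_zero_or_pos d with rfl | hd
    · simp only [univ_eq_empty, sum_empty, mul_zero]; positivity
    calc s / d * ∑ j, |((a j - c j : ℤ) : ℝ)|
        ≤ s / d * ∑ _j : Fin d, ‖latticeToEuclidean a - latticeToEuclidean c‖ := by
          gcongr with j; exact hcoord a j
      _ = s * ‖latticeToEuclidean a - latticeToEuclidean c‖ := by simp; field_simp
  have hg (j) : HasSum (g j) (1 + 2 / (exp (s / d) - 1)) := by
    have hd : (0 : ℝ) < d := by exact_mod_cast j.pos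
    exact (Equiv.subRight (c j)).hasSum_iff.mpr (hasSum_exp_neg_mul_abs_int (by positivity))
  calc ∑ a ∈ S, exp (-s * ‖latticeToEuclidean a - latticeToEuclidean c‖)
      ≤ ∑ a ∈ S, ∏ j, g j (a j) := sum_le_sum fun a _ => hpoint a
    _ ≤ ∏ j, ∑' n, g j n := S.sum_prod_le_prod_tsum (fun _ _ => (exp_pos _).le)
        fun j => (hg j).summable
    _ ≤ ∏ _j : Fin d, (1 + 2 * d / s) :=
        prod_le_prod (fun j _ => tsum_nonneg fun _ => (exp_pos _).le) fun j _ => by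
          have hd : (0 : ℝ) < d := by exact_mod_cast j.pos
          rw [(hg j).tsum_eq, show 2 * (d : ℝ) / s = 2 / (s / d) by field_simp]
          gcongr
          linarith [add_one_le_exp (s / d)]
    _ = (1 + 2 * d / s) ^ d := by simp

lemma Finset.schur_test {ι κ : Type*} {K : ι → κ → ℝ} (hK : ∀ a b, 0 ≤ K a b)
    (A : Finset ι) (S : Finset κ) {B : ℝ} (hB : 0 ≤ B)
    (hrow : ∀ a ∈ A, ∑ b ∈ S, K a b ≤ B) (hcol : ∀ b ∈ S, ∑ a ∈ A, K a b ≤ B) (y : κ → ℝ) :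
    ∑ a ∈ A, (∑ b ∈ S, K a b * y b) ^ 2 ≤ B ^ 2 * ∑ b ∈ S, y b ^ 2 := by
  have hcs : ∀ a, (∑ b ∈ S, K a b * y b) ^ 2 ≤ (∑ b ∈ S, K a b) * ∑ b ∈ S, K a b * y b ^ 2 :=
    fun a => sum_sq_le_sum_mul_sum_of_sq_le_mul S (fun b _ => hK a b)
      (fun b _ => mul_nonneg (hK a b) (sq_nonneg _)) fun b _ => le_of_eq (by ring)
  calc ∑ a ∈ A, (∑ b ∈ S, K a b * y b) ^ 2
      ≤ ∑ a ∈ A, B * ∑ b ∈ S, K a b * y b ^ 2 := sum_le_sum fun a ha =>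
        (hcs a).trans (mul_le_mul_of_nonneg_right (hrow a ha)
          (sum_nonneg fun b _ => mul_nonneg (hK a b) (sq_nonneg _)))
    _ = B * ∑ b ∈ S, (∑ a ∈ A, K a b) * y b ^ 2 := by rw [← mul_sum, sum_comm]; simp_rw [sum_mul]
    _ ≤ B * ∑ b ∈ S, B * y b ^ 2 := by gcongr with b hb; exact hcol b hb
    _ = B ^ 2 * ∑ b ∈ S, y b ^ 2 := by rw [← mul_sum]; ring

lemma tsum_weight_sq_mul_norm_sq_le {ι : Type*} (M : ι → ι → ℂ) {w : ι → ℝ} (hw : ∀ a, 0 < w a)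
    {B : ℝ} (hB : 0 ≤ B) (hrow : ∀ a (T : Finset ι), ∑ b ∈ T, w a / w b * ‖M a b‖ ≤ B)
    (hcol : ∀ b (T : Finset ι), ∑ a ∈ T, w a / w b * ‖M a b‖ ≤ B)
    {z : ι → ℂ} (hz : (Function.support z).Finite) :
    ∑' a, w a ^ 2 * ‖∑' b, M a b * z b‖ ^ 2 ≤ B ^ 2 * ∑' b, w b ^ 2 * ‖z b‖ ^ 2 := by
  set S := hz.toFinset
  have hzS : ∀ b ∉ S, z b = 0 := fun b hb => by simpa [S] using hb
  have hMz (a : ι) : ∑' b, M a b * z b = ∑ b ∈ S, M a b * z b :=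
    tsum_eq_sum fun b hb => by simp [hzS b hb]
  rw [tsum_eq_sum (s := S) (f := fun b => w b ^ 2 * ‖z b‖ ^ 2) fun b hb => by simp [hzS b hb]]
  simp only [hMz]
  refine tsum_le_of_sum_le' (by positivity) fun A => ?_
  have hpoint (a : ι) :
      w a * ‖∑ b ∈ S, M a b * z b‖ ≤ ∑ b ∈ S, w a / w b * ‖M a b‖ * (w b * ‖z b‖) :=
    calc w a * ‖∑ b ∈ S, M a b * z b‖
        ≤ w a * ∑ b ∈ S, ‖M a b‖ * ‖z b‖ :=
          mul_le_mul_of_nonneg_left (norm_sum_le_of_le S fun b _ => (norm_mul _ _).le) (hw a).le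
      _ = ∑ b ∈ S, w a / w b * ‖M a b‖ * (w b * ‖z b‖) := by
          rw [mul_sum]; congr 1 with b; field_simp [(hw b).ne']
  calc ∑ a ∈ A, w a ^ 2 * ‖∑ b ∈ S, M a b * z b‖ ^ 2
      ≤ ∑ a ∈ A, (∑ b ∈ S, w a / w b * ‖M a b‖ * (w b * ‖z b‖)) ^ 2 := by
        gcongr with a
        rw [← mul_pow]
        exact pow_le_pow_left₀ (mul_nonneg (hw a).le (norm_nonneg _)) (hpoint a) 2
    _ ≤ B ^ 2 * ∑ b ∈ S, (w b * ‖z b‖) ^ 2 :=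
        A.schur_test (fun a b => by have := hw a; have := hw b; positivity) S hB
          (fun a _ => hrow a S) (fun b _ => hcol b A) _
    _ = B ^ 2 * ∑ b ∈ S, w b ^ 2 * ‖z b‖ ^ 2 := by simp_rw [mul_pow]

lemma sum_le_of_le_mul_exp_neg_norm_sub {d : ℕ} {f : (Fin d → ℤ) → ℝ} {B γ : ℝ} (hγ : 0 < γ)
    (hγ1 : γ ≤ 1) (hB : 0 ≤ B) (c : Fin d → ℤ)
    (hf : ∀ a, f a ≤ B * exp (-(γ / 4) * ‖latticeToEuclidean a - latticeToEuclidean c‖))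
    (T : Finset (Fin d → ℤ)) :
    ∑ a ∈ T, f a ≤ B * (1 + 8 * d) ^ d * γ ^ (-(d : ℝ)) := by
  have hbase : 1 + 2 * d / (γ / 4) ≤ (1 + 8 * d) / γ := by
    rw [le_div_iff₀ hγ, add_mul, div_div_eq_mul_div, div_mul_cancel₀ _ hγ.ne']
    linarith
  calc ∑ a ∈ T, f a
      ≤ B * ∑ a ∈ T, exp (-(γ / 4) * ‖latticeToEuclidean a - latticeToEuclidean c‖) := by
        rw [mul_sum]; exact sum_le_sum fun a _ => hf a
    _ ≤ B * ((1 + 8 * d) / γ) ^ d := by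
        gcongr
        exact (sum_exp_neg_mul_norm_latticeToEuclidean_sub_le (by positivity) T c).trans
          (by gcongr)
    _ = B * (1 + 8 * d) ^ d * γ ^ (-(d : ℝ)) := by
        rw [rpow_neg hγ.le, rpow_natCast, div_pow, div_eq_mul_inv, mul_assoc]

theorem stmt_9_general (d : ℕ) (p : ℝ) (hp : 0 ≤ p) :
    ∃ C : ℝ, 0 < C ∧
      ∀ γ Δ C₀ : ℝ, 0 < γ → γ ≤ 1 → 0 ≤ Δ → 0 ≤ C₀ →
      ∀ M : (Fin d → ℤ) → (Fin d → ℤ) → ℂ,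
        (∀ a b : Fin d → ℤ,
          Real.sqrt (∑ j, ((a j : ℝ) - (b j : ℝ)) ^ 2) ≤ Δ → M a b = 0) →
        (∀ a b : Fin d → ℤ,
          Δ < Real.sqrt (∑ j, ((a j : ℝ) - (b j : ℝ)) ^ 2) →
          ‖M a b‖ ≤
            C₀ * Real.exp (-γ * Real.sqrt (∑ j, ((a j : ℝ) - (b j : ℝ)) ^ 2))) →
        ∀ z : (Fin d → ℤ) → ℂ, (Function.support z).Finite →
          Real.sqrt (∑' a : Fin d → ℤ,
              (max (Real.sqrt (∑ j, (a j : ℝ) ^ 2)) 1) ^ (2 * p) *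
                ‖∑' b : Fin d → ℤ, M a b * z b‖ ^ 2) ≤
            C * C₀ * γ ^ (-((d : ℝ) + p)) * Real.exp (-γ * Δ / 2) *
              Real.sqrt (∑' b : Fin d → ℤ,
                (max (Real.sqrt (∑ j, (b j : ℝ) ^ 2)) 1) ^ (2 * p) *
                  ‖z b‖ ^ 2) := by
  refine ⟨(4 * p + 5) ^ p * (1 + 8 * d) ^ d, by positivity, ?_⟩
  intro γ Δ C₀ hγ hγ1 _ hC₀ M hband hdecay z hz
  simp only [← norm_latticeToEuclidean, ← norm_latticeToEuclidean_sub] at hband hdecay ⊢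
  set w : (Fin d → ℤ) → ℝ := fun a => max ‖latticeToEuclidean a‖ 1 ^ p
  set B₁ := (4 * p + 5) ^ p * γ ^ (-p) * C₀ * exp (-γ * Δ / 2)
  set B := (4 * p + 5) ^ p * (1 + 8 * d) ^ d * C₀ * γ ^ (-((d : ℝ) + p)) * exp (-γ * Δ / 2)
  have hw (a) : 0 < w a := rpow_pos_of_pos (lt_max_of_lt_right one_pos) p
  have hentry (a b) : w a / w b * ‖M a b‖ ≤
      B₁ * exp (-(γ / 4) * ‖latticeToEuclidean a - latticeToEuclidean b‖) :=
    max_norm_one_rpow_div_mul_le _ _ hp hγ hγ1 hC₀ (norm_nonneg _)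
      (fun h => by rw [hband a b h, norm_zero]) (hdecay a b)
  have hB : B₁ * (1 + 8 * d) ^ d * γ ^ (-(d : ℝ)) = B := by
    simp only [B₁, B, neg_add, rpow_add hγ]; ring
  have hrow (a T) : ∑ b ∈ T, w a / w b * ‖M a b‖ ≤ B :=
    hB ▸ sum_le_of_le_mul_exp_neg_norm_sub hγ hγ1 (by positivity) a
      (fun b => by rw [norm_sub_rev]; exact hentry a b) T
  have hcol (b T) : ∑ a ∈ T, w a / w b * ‖M a b‖ ≤ B :=
    hB ▸ sum_le_of_le_mul_exp_neg_norm_sub hγ hγ1 (by positivity) b (hentry · b) T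
  have hw2 (a) : max ‖latticeToEuclidean a‖ 1 ^ (2 * p) = w a ^ 2 := by
    rw [mul_comm, ← rpow_mul_natCast (by positivity)]; norm_num
  have hB0 : 0 ≤ B := by positivity
  simp only [hw2]
  rw [← sqrt_sq hB0, ← sqrt_mul (sq_nonneg _)]
  exact sqrt_le_sqrt (tsum_weight_sq_mul_norm_sq_le M hw hB0 hrow hcol hz)

/-- Schur-test / Young-type estimate on the weighted space `ℓ²_p(ℤ^d)`: a matrix with
exponentially decaying entries vanishing on the band `|a-b| ≤ Δ` defines an operator on
`ℓ²_p` whose norm carries the factor `C₀ γ^{-(d+p)} e^{-γΔ/2}`. -/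
theorem stmt_9 (d : ℕ) (hd : 1 ≤ d) (p : ℝ) (hp : 0 ≤ p) :
    ∃ C : ℝ, 0 < C ∧
      ∀ γ Δ C₀ : ℝ, 0 < γ → γ ≤ 1 → 0 ≤ Δ → 0 ≤ C₀ →
      ∀ M : (Fin d → ℤ) → (Fin d → ℤ) → ℂ,
        (∀ a b : Fin d → ℤ,
          Real.sqrt (∑ j, ((a j : ℝ) - (b j : ℝ)) ^ 2) ≤ Δ → M a b = 0) →
        (∀ a b : Fin d → ℤ,
          Δ < Real.sqrt (∑ j, ((a j : ℝ) - (b j : ℝ)) ^ 2) →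
          ‖M a b‖ ≤
            C₀ * Real.exp (-γ * Real.sqrt (∑ j, ((a j : ℝ) - (b j : ℝ)) ^ 2))) →
        ∀ z : (Fin d → ℤ) → ℂ, (Function.support z).Finite →
          Real.sqrt (∑' a : Fin d → ℤ,
              (max (Real.sqrt (∑ j, (a j : ℝ) ^ 2)) 1) ^ (2 * p) *
                ‖∑' b : Fin d → ℤ, M a b * z b‖ ^ 2) ≤
            C * C₀ * γ ^ (-((d : ℝ) + p)) * Real.exp (-γ * Δ / 2) *
              Real.sqrt (∑' b : Fin d → ℤ,
                (max (Real.sqrt (∑ j, (b j : ℝ) ^ 2)) 1) ^ (2 * p) *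
                  ‖z b‖ ^ 2) :=
  stmt_9_general d p hp
end
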